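/- arXiv:2401.08961 — 9 statements merged into one kernel-verified Lean document; each statement's English description precedes it below -/
import Mathlib

section
/- For a list of items A = (a_1,...,a_n), attraction probabilities u: items → [0,1], and weights w: items → ℝ, define the cascading reward f(A,u,w) = Σ_{i=1}^{n} (∏_{j=1}^{i-1} (1 - u(a_j))) · u(a_i) · w(a_i). If for some index ℓ with 1 ≤ ℓ < n we have w(a_ℓ) < w(a_{ℓ+1}), then swapping a_ℓ and a_{ℓ+1} does not decrease the value: f((a_1,...,a_ℓ,a_{ℓ+1},...,a_n),u,w) ≤ f((a_1,...,a_{ℓ+1},a_ℓ,...,a_n),u,w). -/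
/-- The cascading reward function:
`f(A,u,w) = Σ_{i=1}^{|A|} ∏_{j<i}(1-u(A(j))) · u(A(i)) · w(A(i))`. -/
noncomputable def cascadeF {α : Type*} (u w : α → ℝ) : List α → ℝ
  | [] => 0
  | a :: t => u a * w a + (1 - u a) * cascadeF u w t

/-- Swapping two adjacent items so that the larger weight comes first
does not decrease the cascading reward. -/
theorem swap_adjacent_le {α : Type*} (u w : α → ℝ)
    (hu : ∀ a, 0 ≤ u a ∧ u a ≤ 1)
    (L1 L2 : List α) (x y : α) (hw : w x < w y) :
    cascadeF u w (L1 ++ x :: y :: L2) ≤ cascadeF u w (L1 ++ y :: x :: L2) := by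
  induction L1 with
  | nil =>
    simp only [List.nil_append, cascadeF]
    have hx := hu x; have hy := hu y
    nlinarith [mul_nonneg hx.1 hy.1]
  | cons a t ih =>
    simp only [List.cons_append, cascadeF]
    have ha := hu a
    have h2 : cascadeF u w (t.append (x :: y :: L2)) ≤ cascadeF u w (t.append (y :: x :: L2)) := ih
    nlinarith [h2]
end

section
/- With f the cascading reward function, for any finite set X of items, the maximum of f(A,u,w) over all permutations A of X is attained by the permutation that sorts the items of X in descending order of their weights w. That is, f(DesW(X),u,w) = max over A ∈ Perm(X) of f(A,u,w), where DesW(X) sorts X in descending order of w. -/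
section Cascade

variable {α : Type*} (u w : α → ℝ)

lemma cascadeF_cons_cons_sub_swap (x y : α) (t : List α) :
    cascadeF u w (x :: y :: t) - cascadeF u w (y :: x :: t) = u x * u y * (w x - w y) := by
  simp only [cascadeF]
  ring

lemma cascadeF_swap_le {x y : α} (hx : 0 ≤ u x) (hy : 0 ≤ u y) (hw : w y ≤ w x)
    (t : List α) : cascadeF u w (y :: x :: t) ≤ cascadeF u w (x :: y :: t) := by
  have := cascadeF_cons_cons_sub_swap u w x y t
  nlinarith [mul_nonneg (mul_nonneg hx hy) (sub_nonneg.mpr hw)]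

lemma cascadeF_cons_le_cons {a : α} (ha : u a ≤ 1) {t t' : List α}
    (h : cascadeF u w t ≤ cascadeF u w t') : cascadeF u w (a :: t) ≤ cascadeF u w (a :: t') := by
  simp only [cascadeF]
  nlinarith

lemma cascadeF_append_cons_le_cons_append (hu : ∀ a, 0 ≤ u a ∧ u a ≤ 1) {d : α} (q : List α) :
    ∀ {p : List α}, (∀ x ∈ p, w x ≤ w d) →
      cascadeF u w (p ++ d :: q) ≤ cascadeF u w (d :: (p ++ q))
  | [], _ => le_rfl
  | a :: p, hp =>
    calc cascadeF u w (a :: (p ++ d :: q))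
        ≤ cascadeF u w (a :: d :: (p ++ q)) :=
          cascadeF_cons_le_cons u w (hu a).2
            (cascadeF_append_cons_le_cons_append hu q fun x hx => hp x (.tail a hx))
      _ ≤ cascadeF u w (d :: a :: (p ++ q)) :=
          cascadeF_swap_le u w (hu d).1 (hu a).1 (hp a List.mem_cons_self) _

end Cascade

/-- The maximum of `f(A,u,w)` over all permutations `A` of a fixed set of items
is attained by the list sorted in descending order of the weights `w`:
every permutation `A` of a descending-sorted list `D` satisfies `f(A) ≤ f(D)`. -/
theorem descending_sort_is_optimal {α : Type*} (u w : α → ℝ)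
    (hu : ∀ a, 0 ≤ u a ∧ u a ≤ 1)
    (D : List α) (hD : D.Pairwise (fun a b => w b ≤ w a)) :
    ∀ A : List α, A.Perm D → cascadeF u w A ≤ cascadeF u w D := by
  induction D with
  | nil => intro A hA; simp [hA.eq_nil]
  | cons d s ih =>
    intro A hA
    obtain ⟨hd_max, hs⟩ := List.pairwise_cons.mp hD
    obtain ⟨p, q, rfl⟩ := List.append_of_mem (hA.mem_iff.mpr List.mem_cons_self)
    have hperm : (p ++ q).Perm s := (List.perm_middle.symm.trans hA).cons_inv
    have hp : ∀ x ∈ p, w x ≤ w d := fun x hx =>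
      hd_max x (hperm.subset (List.mem_append_left q hx))
    calc cascadeF u w (p ++ d :: q)
        ≤ cascadeF u w (d :: (p ++ q)) := cascadeF_append_cons_le_cons_append u w hu q hp
      _ ≤ cascadeF u w (d :: s) := cascadeF_cons_le_cons u w (hu d).2 (ih hs _ hperm)
end

section
/- Let a_⊥ satisfy u(a_⊥) = 1, and let X, X' be disjoint finite sets of items (not containing a_⊥) with w(a) > w(a_⊥) for every a ∈ X, and w(a) < w(a_⊥) for every a ∈ X'. Then f((DesW(X ∪ X'), a_⊥), u, w) ≤ f((DesW(X), a_⊥), u, w); i.e., discarding all items with weight below w(a_⊥) never decreases the optimally-ordered cascading reward. -/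
namespace cascadeF

variable {α : Type*} (u w : α → ℝ)

lemma append_cons_of_forall_weight_eq (a : α) (r : List α) :
    ∀ s : List α, (∀ b ∈ s, w b = w a) →
      cascadeF u w (s ++ a :: r) = cascadeF u w (a :: (s ++ r))
  | [], _ => rfl
  | b :: s, hs => by
    have hb : w b = w a := hs b List.mem_cons_self
    have ih := append_cons_of_forall_weight_eq a r s fun c hc => hs c (List.mem_cons_of_mem b hc)
    simp only [List.cons_append, cascadeF] at ih ⊢
    rw [ih, hb]
    ring

lemma append_eq_of_perm_of_pairwise (M : List α) :
    ∀ {L₁ L₂ : List α}, L₁.Perm L₂ → L₁.Pairwise (fun a b => w b ≤ w a) →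
      L₂.Pairwise (fun a b => w b ≤ w a) → cascadeF u w (L₁ ++ M) = cascadeF u w (L₂ ++ M)
  | [], _, hperm, _, _ => by rw [hperm.nil_eq]
  | a :: t, L₂, hperm, h₁, h₂ => by
    obtain ⟨s, r, rfl⟩ := List.append_of_mem (hperm.subset List.mem_cons_self)
    have hs : ∀ b ∈ s, w b = w a := by
      intro b hb
      have hab : w a ≤ w b := (List.pairwise_append.mp h₂).2.2 b hb a List.mem_cons_self
      rcases List.mem_cons.mp (hperm.symm.subset (List.mem_append_left _ hb)) with rfl | hbt
      · rfl
      · exact le_antisymm (List.rel_of_pairwise_cons h₁ hbt) hab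
    have hperm' : t.Perm (s ++ r) := (hperm.trans List.perm_middle).cons_inv
    have hsr : (s ++ r).Pairwise (fun a b => w b ≤ w a) :=
      h₂.sublist ((List.sublist_cons_self a r).append_left s)
    rw [List.cons_append, List.append_assoc, List.cons_append,
      append_cons_of_forall_weight_eq u w a _ s hs, cascadeF, cascadeF, ← List.append_assoc,
      append_eq_of_perm_of_pairwise M hperm' h₁.of_cons hsr]

lemma append_le_append {M N : List α} (hMN : cascadeF u w M ≤ cascadeF u w N) :
    ∀ L : List α, (∀ a ∈ L, u a ≤ 1) → cascadeF u w (L ++ M) ≤ cascadeF u w (L ++ N)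
  | [], _ => hMN
  | a :: L, hL => by
    have ih := append_le_append hMN L fun b hb => hL b (List.mem_cons_of_mem a hb)
    have ha : 0 ≤ 1 - u a := sub_nonneg.mpr (hL a List.mem_cons_self)
    simp only [List.cons_append, cascadeF]
    gcongr

lemma append_singleton_le {b : α} (hb : u b = 1) :
    ∀ B : List α, (∀ a ∈ B, 0 ≤ u a ∧ u a ≤ 1) → (∀ a ∈ B, w a ≤ w b) →
      cascadeF u w (B ++ [b]) ≤ w b
  | [], _, _ => by simp [cascadeF, hb]
  | a :: B, hu, hw => by
    have ih := append_singleton_le hb B (fun c hc => hu c (List.mem_cons_of_mem a hc))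
      fun c hc => hw c (List.mem_cons_of_mem a hc)
    obtain ⟨hu₀, hu₁⟩ := hu a List.mem_cons_self
    have hwa : u a * w a ≤ u a * w b := mul_le_mul_of_nonneg_left (hw a List.mem_cons_self) hu₀
    have htail : (1 - u a) * cascadeF u w (B ++ [b]) ≤ (1 - u a) * w b :=
      mul_le_mul_of_nonneg_left ih (sub_nonneg.mpr hu₁)
    simp only [List.cons_append, cascadeF]
    linarith

end cascadeF

theorem discard_items_below_bot_general {α : Type*} [DecidableEq α] (u w : α → ℝ) (bot : α)
    (hu : ∀ a, 0 ≤ u a ∧ u a ≤ 1) (hbot : u bot = 1)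
    (X X' : Finset α)
    (hwX : ∀ a ∈ X, w bot < w a) (hwX' : ∀ a ∈ X', w a < w bot)
    (LX LU : List α)
    (hLXp : LX.Perm X.toList) (hLXs : LX.Pairwise (fun a b => w b ≤ w a))
    (hLUp : LU.Perm (X ∪ X').toList) (hLUs : LU.Pairwise (fun a b => w b ≤ w a)) :
    cascadeF u w (LU ++ [bot]) ≤ cascadeF u w (LX ++ [bot]) := by
  set B := LU.filter (· ∈ X')
  have hmemLX : ∀ a, a ∈ LX ↔ a ∈ X := fun a => by simp [hLXp.mem_iff]
  have hmemB : ∀ a ∈ B, a ∈ X' := fun a ha => by simpa using (List.mem_filter.mp ha).2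
  have hLUnodup : LU.Nodup := hLUp.nodup_iff.mpr (X ∪ X').nodup_toList
  have hsorted : (LX ++ B).Pairwise (fun a b => w b ≤ w a) :=
    List.pairwise_append.mpr ⟨hLXs, hLUs.filter _, fun a ha b hb =>
      ((hwX' b (hmemB b hb)).trans (hwX a ((hmemLX a).mp ha))).le⟩
  have hnodup : (LX ++ B).Nodup :=
    List.nodup_append.mpr ⟨hLXp.nodup_iff.mpr X.nodup_toList,
      hLUnodup.filter _, fun a ha b hb hab =>
      ((hwX' b (hmemB b hb)).trans (hab ▸ hwX a ((hmemLX a).mp ha))).false⟩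
  have hperm : (LX ++ B).Perm LU := by
    refine (List.perm_ext_iff_of_nodup hnodup hLUnodup).mpr ?_
    intro a
    simp only [List.mem_append, hmemLX, B, List.mem_filter, hLUp.mem_iff, Finset.mem_toList,
      Finset.mem_union, decide_eq_true_eq]
    tauto
  calc cascadeF u w (LU ++ [bot]) = cascadeF u w (LX ++ (B ++ [bot])) := by
        rw [← List.append_assoc, cascadeF.append_eq_of_perm_of_pairwise u w _ hperm hsorted hLUs]
    _ ≤ cascadeF u w (LX ++ [bot]) := by
        refine cascadeF.append_le_append u w ?_ LX fun a _ => (hu a).2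
        exact (cascadeF.append_singleton_le u w hbot B (fun a _ => hu a)
          fun a ha => (hwX' a (hmemB a ha)).le).trans_eq (by simp [cascadeF, hbot])

/-- Discarding all items with weight below `w(a_⊥)` never decreases the
optimally-ordered cascading reward:
`f((DesW(X ∪ X'), a_⊥), u, w) ≤ f((DesW(X), a_⊥), u, w)`, where every item of `X`
has weight above `w(a_⊥)` and every item of `X'` has weight below `w(a_⊥)`. -/
theorem discard_items_below_bot {α : Type*} [DecidableEq α] (u w : α → ℝ) (bot : α)
    (hu : ∀ a, 0 ≤ u a ∧ u a ≤ 1) (hbot : u bot = 1)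
    (X X' : Finset α) (hdisj : Disjoint X X')
    (hbX : bot ∉ X) (hbX' : bot ∉ X')
    (hwX : ∀ a ∈ X, w bot < w a) (hwX' : ∀ a ∈ X', w a < w bot)
    (LX LU : List α)
    (hLXp : LX.Perm X.toList) (hLXs : LX.Pairwise (fun a b => w b ≤ w a))
    (hLUp : LU.Perm (X ∪ X').toList) (hLUs : LU.Pairwise (fun a b => w b ≤ w a)) :
    cascadeF u w (LU ++ [bot]) ≤ cascadeF u w (LX ++ [bot]) :=
  discard_items_below_bot_general u w bot hu hbot X X' hwX hwX' LX LU hLXp hLXs hLUp hLUs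
end

section
/- Monotonicity of the cascading reward in attraction probabilities: Let A = (a_1,...,a_n, a_⊥) be a list with weights satisfying w(a_1) ≥ w(a_2) ≥ ... ≥ w(a_n) ≥ w(a_⊥), and let ū, u: items → [0,1] be two attraction probability functions with ū(a_⊥) = u(a_⊥) = 1 and ū(a) ≥ u(a) for every a in A. Then f(A, ū, w) ≥ f(A, u, w). -/
/-!
Unfolding the first item, `f(a :: t) = u(a) w(a) + (1 - u(a)) f(t)` is affine in `u(a)` with
slope `w(a) - f(t)`. Since `f(t)` is a convex combination of the weights of `t`, all of which are at
most `w(a)`, this slope is nonnegative, so raising `u(a)` to `ū(a)` cannot decrease the reward;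
raising the attraction probabilities of the tail cannot either, by induction, because the tail
reward enters with the nonnegative factor `1 - ū(a)`.
-/

section

variable {α : Type*} {u w : α → ℝ}

theorem cascadeF_cons (a : α) (t : List α) :
    cascadeF u w (a :: t) = u a * w a + (1 - u a) * cascadeF u w t := rfl

theorem cascadeF_append_singleton_le {bot : α} {c : ℝ} (hbot : u bot = 1) {L : List α}
    (hu : ∀ a ∈ L ++ [bot], 0 ≤ u a ∧ u a ≤ 1) (hw : ∀ a ∈ L ++ [bot], w a ≤ c) :
    cascadeF u w (L ++ [bot]) ≤ c := by
  induction L with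
  | nil => simpa [cascadeF, hbot] using hw bot (by simp)
  | cons a t ih =>
    simp only [List.cons_append, List.forall_mem_cons] at hu hw
    obtain ⟨⟨hu₀, hu₁⟩, hu_tail⟩ := hu
    have htail : cascadeF u w (t ++ [bot]) ≤ c := ih hu_tail hw.2
    rw [List.cons_append, cascadeF_cons]
    nlinarith [hw.1]

end

theorem cascade_step_mono {p q wa x y : ℝ} (hpq : p ≤ q) (hq : q ≤ 1) (hx : x ≤ wa)
    (hxy : x ≤ y) : p * wa + (1 - p) * x ≤ q * wa + (1 - q) * y := by
  nlinarith [mul_nonneg (sub_nonneg.2 hpq) (sub_nonneg.2 hx),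
    mul_nonneg (sub_nonneg.2 hq) (sub_nonneg.2 hxy)]

theorem cascadeF_mono_in_u_general {α : Type*} (w ubar u : α → ℝ) (bot : α) (L : List α)
    (hsort : (L ++ [bot]).Pairwise (fun a b => w b ≤ w a))
    (hu : ∀ a ∈ L ++ [bot], 0 ≤ u a ∧ u a ≤ 1)
    (hubar : ∀ a ∈ L ++ [bot], 0 ≤ ubar a ∧ ubar a ≤ 1)
    (hubot' : u bot = 1)
    (hge : ∀ a ∈ L ++ [bot], u a ≤ ubar a) :
    cascadeF u w (L ++ [bot]) ≤ cascadeF ubar w (L ++ [bot]) := by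
  induction L with
  | nil =>
    have hubot : ubar bot = 1 := le_antisymm (hubar bot (by simp)).2 (hubot' ▸ hge bot (by simp))
    simp [cascadeF, hubot, hubot']
  | cons a t ih =>
    have hu_tail : ∀ b ∈ t ++ [bot], 0 ≤ u b ∧ u b ≤ 1 := fun b hb => hu b (by simp [hb])
    have htail_le : cascadeF u w (t ++ [bot]) ≤ w a :=
      cascadeF_append_singleton_le hubot' hu_tail fun b => List.rel_of_pairwise_cons hsort
    have htail_mono : cascadeF u w (t ++ [bot]) ≤ cascadeF ubar w (t ++ [bot]) :=
      ih hsort.of_cons hu_tail (fun b hb => hubar b (by simp [hb]))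
        (fun b hb => hge b (by simp [hb]))
    simp only [List.cons_append, cascadeF_cons]
    exact cascade_step_mono (hge a (by simp)) (hubar a (by simp)).2 htail_le htail_mono

/-- Monotonicity of the cascading reward in the attraction probabilities:
for a list `A = (a_1, …, a_n, a_⊥)` whose weights are non-increasing
(ending at `w(a_⊥)`), and attraction functions `ū ≥ u` pointwise on `A`
with values in `[0,1]` and `ū(a_⊥) = u(a_⊥) = 1`, we have `f(A,ū,w) ≥ f(A,u,w)`. -/
theorem cascadeF_mono_in_u {α : Type*} (w ubar u : α → ℝ) (bot : α) (L : List α)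
    (hsort : (L ++ [bot]).Pairwise (fun a b => w b ≤ w a))
    (hu : ∀ a ∈ L ++ [bot], 0 ≤ u a ∧ u a ≤ 1)
    (hubar : ∀ a ∈ L ++ [bot], 0 ≤ ubar a ∧ ubar a ≤ 1)
    (hubot : ubar bot = 1) (hubot' : u bot = 1)
    (hge : ∀ a ∈ L ++ [bot], u a ≤ ubar a) :
    cascadeF u w (L ++ [bot]) ≤ cascadeF ubar w (L ++ [bot]) :=
  cascadeF_mono_in_u_general w ubar u bot L hsort hu hubar hubot' hge
end

section
/- Key induction inequality for monotonicity: Let a_1,...,a_k be items with weights w(a_1) ≥ ... ≥ w(a_k), and ū(a_i) ≥ u(a_i) with ū(a_i), u(a_i) ∈ [0,1] for all i. Then Σ_{i=1}^{k} ∏_{j<i}(1-ū(a_j))·ū(a_i)·w(a_i) − Σ_{i=1}^{k} ∏_{j<i}(1-u(a_j))·u(a_i)·w(a_i) ≥ Σ_{ℓ=1}^{k} [∏_{j<ℓ}(1-ū(a_j))] · (ū(a_ℓ) − u(a_ℓ)) · [∏_{j=ℓ+1}^{k}(1-u(a_j))] · w(a_k). -/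
theorem List.sum_prod_take_mul_sub_mul_prod_drop {α R : Type*} [CommRing R] (f g : α → R) :
    ∀ L : List α, ∑ ℓ : Fin L.length,
        ((L.take ℓ).map f).prod * (g (L.get ℓ) - f (L.get ℓ)) * ((L.drop (ℓ + 1)).map g).prod
      = (L.map g).prod - (L.map f).prod
  | [] => by simp
  | a :: t => by
    refine (Fin.sum_univ_succ (n := t.length) _).trans ?_
    simp only [Fin.val_succ, Fin.val_zero, List.get_eq_getElem, List.getElem_cons_succ,
      List.getElem_cons_zero, List.take_succ_cons, List.drop_succ_cons, List.take_zero,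
      List.drop_zero, List.map_cons, List.map_nil, List.prod_cons, List.prod_nil]
    have hsum := List.sum_prod_take_mul_sub_mul_prod_drop f g t
    simp only [List.get_eq_getElem, mul_assoc] at hsum ⊢
    rw [← Finset.mul_sum, hsum]
    ring

section Cascade

variable {α : Type*} (v w : α → ℝ) (m : ℝ)

theorem cascadeF_cons_add_prod_mul (a : α) (t : List α) :
    cascadeF v w (a :: t) + ((a :: t).map (fun b => 1 - v b)).prod * m
      = v a * w a + (1 - v a) * (cascadeF v w t + (t.map (fun b => 1 - v b)).prod * m) := by
  simp only [cascadeF, List.map_cons, List.prod_cons]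
  ring

theorem cascadeF_add_prod_mul_le {c : ℝ} :
    ∀ L : List α, (∀ a ∈ L, 0 ≤ v a ∧ v a ≤ 1) → (∀ a ∈ L, w a ≤ c) → m ≤ c →
      cascadeF v w L + (L.map (fun a => 1 - v a)).prod * m ≤ c
  | [], _, _, hm => by simpa [cascadeF] using hm
  | a :: t, hv, hw, hm => by
    obtain ⟨hva₀, hva₁⟩ := hv a List.mem_cons_self
    have htail := cascadeF_add_prod_mul_le t (fun b hb => hv b (List.mem_cons_of_mem a hb))
      (fun b hb => hw b (List.mem_cons_of_mem a hb)) hm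
    rw [cascadeF_cons_add_prod_mul]
    linarith [mul_le_mul_of_nonneg_left (hw a List.mem_cons_self) hva₀,
      mul_le_mul_of_nonneg_left htail (sub_nonneg.2 hva₁)]

theorem cascadeF_add_prod_mul_mono (u ubar : α → ℝ) :
    ∀ L : List α, L.Pairwise (fun a b => w b ≤ w a) →
      (∀ a ∈ L, 0 ≤ u a ∧ u a ≤ 1) → (∀ a ∈ L, ubar a ≤ 1) →
      (∀ a ∈ L, u a ≤ ubar a) → (∀ a ∈ L, m ≤ w a) →
      cascadeF u w L + (L.map (fun a => 1 - u a)).prod * m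
        ≤ cascadeF ubar w L + (L.map (fun a => 1 - ubar a)).prod * m
  | [], _, _, _, _, _ => le_rfl
  | a :: t, hsort, hu, hubar, hge, hm => by
    rw [List.pairwise_cons] at hsort
    have hmem : ∀ b ∈ t, b ∈ a :: t := fun b hb => List.mem_cons_of_mem a hb
    have htail_le : cascadeF u w t + (t.map (fun b => 1 - u b)).prod * m ≤ w a :=
      cascadeF_add_prod_mul_le u w m t (fun b hb => hu b (hmem b hb)) hsort.1
        (hm a List.mem_cons_self)
    have htail_mono := cascadeF_add_prod_mul_mono u ubar t hsort.2
      (fun b hb => hu b (hmem b hb)) (fun b hb => hubar b (hmem b hb))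
      (fun b hb => hge b (hmem b hb)) (fun b hb => hm b (hmem b hb))
    rw [cascadeF_cons_add_prod_mul, cascadeF_cons_add_prod_mul]
    linarith [mul_nonneg (sub_nonneg.2 (hge a List.mem_cons_self)) (sub_nonneg.2 htail_le),
      mul_le_mul_of_nonneg_left htail_mono (sub_nonneg.2 (hubar a List.mem_cons_self))]

end Cascade

/-- Key induction inequality for monotonicity: for items `a_1, …, a_k` with
non-increasing weights and attraction functions `ū ≥ u` pointwise (values in `[0,1]`),
`f(L,ū,w) − f(L,u,w) ≥ Σ_ℓ [∏_{j<ℓ}(1-ū(a_j))]·(ū(a_ℓ)−u(a_ℓ))·[∏_{j>ℓ}(1-u(a_j))]·w(a_k)`. -/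
theorem key_induction_inequality {α : Type*} (w ubar u : α → ℝ)
    (L : List α) (hne : L ≠ [])
    (hsort : L.Pairwise (fun a b => w b ≤ w a))
    (hu : ∀ a ∈ L, 0 ≤ u a ∧ u a ≤ 1)
    (hubar : ∀ a ∈ L, 0 ≤ ubar a ∧ ubar a ≤ 1)
    (hge : ∀ a ∈ L, u a ≤ ubar a) :
    ∑ ℓ : Fin L.length,
        ((L.take ℓ).map (fun a => 1 - ubar a)).prod
          * (ubar (L.get ℓ) - u (L.get ℓ))
          * ((L.drop (ℓ + 1)).map (fun a => 1 - u a)).prod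
          * w (L.getLast hne)
      ≤ cascadeF ubar w L - cascadeF u w L := by
  have htelescope := List.sum_prod_take_mul_sub_mul_prod_drop
    (fun a => 1 - ubar a) (fun a => 1 - u a) L
  simp only [sub_sub_sub_cancel_left] at htelescope
  have hlast : ∀ a ∈ L, w (L.getLast hne) ≤ w a := fun a ha =>
    hsort.rel_getLast_of_rel_getLast_getLast ha le_rfl
  have hmono := cascadeF_add_prod_mul_mono w (w (L.getLast hne)) u ubar L hsort hu
    (fun a ha => (hubar a ha).2) hge hlast
  rw [← Finset.sum_mul, htelescope]
  linarith
end

section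
/- Correctness of the dynamic programming recursion for best-subset cascading reward: Fix items a_1,...,a_J with weights w(a_1) ≥ ... ≥ w(a_J) > w(a_⊥) and u-values in [0,1]. For 1 ≤ i ≤ J and 0 ≤ k ≤ min{m, J−i+1}, let F[i][k] be the maximum of f((a'_1,...,a'_k, a_⊥), u, w) over all subsequences (a'_1,...,a'_k) of (a_i,...,a_J) of length k (with F[i][0] = w(a_⊥)). Then F satisfies the recursion F[i][k] = max{ F[i+1][k], u(a_i)·w(a_i) + (1−u(a_i))·F[i+1][k−1] } for 1 ≤ i ≤ J−1 and 1 ≤ k ≤ min{m, J−i+1}, with F[J][1] = u(a_J)·w(a_J) + (1−u(a_J))·w(a_⊥). -/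
/-- `bestF u w bot L k` is the maximum of `f((a'_1,…,a'_k, a_⊥), u, w)` over all
length-`k` subsequences `(a'_1,…,a'_k)` of the list `L`. -/
noncomputable def bestF {α : Type*} (u w : α → ℝ) (bot : α) (L : List α) (k : ℕ) : ℝ :=
  sSup {x : ℝ | ∃ s : List α, s.Sublist L ∧ s.length = k ∧ x = cascadeF u w (s ++ [bot])}

/-!
Prepending `a` to a list acts on its cascading reward by the affine map
`x ↦ u a * w a + (1 - u a) * x`, which is monotone when `u a ≤ 1`. The length-`(k+1)`
subsequences of `a :: L` are those of `L` together with `a` prepended to those of length `k`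
of `L`; so the optimum over them is the larger of the optimum over the first family and the
affine map applied to the optimum over the second, since a continuous monotone map commutes
with `sSup`.
-/

theorem csSup_union_image_of_monotone {α : Type*} [ConditionallyCompleteLinearOrder α]
    [TopologicalSpace α] [OrderTopology α] {A B : Set α} {f : α → α}
    (hf : Monotone f) (hfc : ContinuousAt f (sSup B))
    (hA : A.Nonempty) (hA' : BddAbove A) (hB : B.Nonempty) (hB' : BddAbove B) :
    sSup (A ∪ f '' B) = max (sSup A) (f (sSup B)) := by
  rw [csSup_union hA' hA (hf.map_bddAbove hB') (hB.image f),
    hf.map_csSup_of_continuousAt hfc hB hB']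

section BestSubsequence

variable {α : Type*} (u w : α → ℝ) (bot : α)

theorem bestF_eq_sSup_image (L : List α) (k : ℕ) :
    bestF u w bot L k = sSup ((fun s => cascadeF u w (s ++ [bot])) '' {s | s ∈ L.sublistsLen k}) := by
  unfold bestF
  congr 1
  ext x
  simp [List.mem_sublistsLen, eq_comm, and_assoc]

theorem sublistsLen_nonempty {L : List α} {k : ℕ} (hk : k ≤ L.length) :
    {s | s ∈ L.sublistsLen k}.Nonempty :=
  ⟨L.take k, List.mem_sublistsLen.2 ⟨L.take_sublist k, by simp [hk]⟩⟩

theorem bestF_zero (hbot : u bot = 1) (L : List α) : bestF u w bot L 0 = w bot := by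
  simp [bestF_eq_sSup_image, List.sublistsLen_zero, cascadeF, hbot]

theorem bestF_length (L : List α) : bestF u w bot L L.length = cascadeF u w (L ++ [bot]) := by
  simp [bestF_eq_sSup_image, List.sublistsLen_length]

theorem bestF_cons_succ {a : α} (hua : u a ≤ 1) {L : List α} {k : ℕ} (hk : k + 1 ≤ L.length) :
    bestF u w bot (a :: L) (k + 1) =
      max (bestF u w bot L (k + 1)) (u a * w a + (1 - u a) * bestF u w bot L k) := by
  let g : List α → ℝ := fun s => cascadeF u w (s ++ [bot])
  let f : ℝ → ℝ := fun x => u a * w a + (1 - u a) * x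
  have hcons : {s | s ∈ (a :: L).sublistsLen (k + 1)} =
      {s | s ∈ L.sublistsLen (k + 1)} ∪ List.cons a '' {s | s ∈ L.sublistsLen k} := by
    ext s
    simp [List.sublistsLen_succ_cons, eq_comm]
  have himg (B : Set (List α)) : g '' (List.cons a '' B) = f '' (g '' B) := by
    simp only [Set.image_image]
    rfl
  have hf : Monotone f := fun x y hxy => by
    simp only [f]
    nlinarith
  have hfin (j : ℕ) : BddAbove (g '' {s | s ∈ L.sublistsLen j}) :=
    ((L.sublistsLen j).finite_toSet.image g).bddAbove
  calc bestF u w bot (a :: L) (k + 1)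
      = sSup (g '' {s | s ∈ L.sublistsLen (k + 1)} ∪ f '' (g '' {s | s ∈ L.sublistsLen k})) := by
        rw [bestF_eq_sSup_image, hcons, Set.image_union, himg]
    _ = max (bestF u w bot L (k + 1)) (f (bestF u w bot L k)) := by
        rw [csSup_union_image_of_monotone hf (by fun_prop)
          ((sublistsLen_nonempty hk).image g) (hfin _)
          ((sublistsLen_nonempty (by omega)).image g) (hfin _),
          bestF_eq_sSup_image, bestF_eq_sSup_image]

end BestSubsequence

theorem dp_recursion_correct_general {α : Type*} (u w : α → ℝ) (bot : α)
    (a : α) (rest : List α)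
    (hu : ∀ x ∈ a :: rest, 0 ≤ u x ∧ u x ≤ 1) (hbot : u bot = 1) :
    (∀ L : List α, bestF u w bot L 0 = w bot) ∧
    (bestF u w bot [a] 1 = u a * w a + (1 - u a) * w bot) ∧
    (∀ k : ℕ, 1 ≤ k → k ≤ rest.length →
      bestF u w bot (a :: rest) k =
        max (bestF u w bot rest k)
            (u a * w a + (1 - u a) * bestF u w bot rest (k - 1))) ∧
    (bestF u w bot (a :: rest) (rest.length + 1) =
      u a * w a + (1 - u a) * bestF u w bot rest rest.length) := by
  refine ⟨bestF_zero u w bot hbot, ?_, ?_, ?_⟩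
  · rw [← List.length_singleton (a := a), bestF_length]
    simp [cascadeF, hbot]
  · rintro (_ | k) hk1 hk2
    · omega
    · exact bestF_cons_succ u w bot (hu a List.mem_cons_self).2 hk2
  · rw [← List.length_cons, bestF_length, bestF_length]
    rfl

/-- Correctness of the dynamic programming recursion for the best-subset cascading
reward: with items sorted in descending order of weights, all above `w(a_⊥)`, the
optimal values satisfy `F[i][0] = w(a_⊥)`, `F[J][1] = u(a_J)w(a_J)+(1−u(a_J))w(a_⊥)`,
and `F[i][k] = max{F[i+1][k], u(a_i)w(a_i)+(1−u(a_i))F[i+1][k−1]}`. -/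
theorem dp_recursion_correct {α : Type*} (u w : α → ℝ) (bot : α)
    (a : α) (rest : List α)
    (hu : ∀ x ∈ a :: rest, 0 ≤ u x ∧ u x ≤ 1) (hbot : u bot = 1)
    (hsort : (a :: rest).Pairwise (fun x y => w y ≤ w x))
    (hw : ∀ x ∈ a :: rest, w bot < w x) :
    (∀ L : List α, bestF u w bot L 0 = w bot) ∧
    (bestF u w bot [a] 1 = u a * w a + (1 - u a) * w bot) ∧
    (∀ k : ℕ, 1 ≤ k → k ≤ rest.length →
      bestF u w bot (a :: rest) k =
        max (bestF u w bot rest k)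
            (u a * w a + (1 - u a) * bestF u w bot rest (k - 1))) ∧
    (bestF u w bot (a :: rest) (rest.length + 1) =
      u a * w a + (1 - u a) * bestF u w bot rest rest.length) :=
  dp_recursion_correct_general u w bot a rest hu hbot
end

section
/- Correctness of the BestPerm oracle: Given a ground set of N regular items plus a_⊥ with u(a_⊥) = 1, u: items → [0,1], w: items → ℝ, and cardinality bound m, the algorithm that (i) sorts items by descending w; (ii) if no regular item has weight above w(a_⊥), returns the best single item; (iii) if 1 ≤ J ≤ m items have weight above w(a_⊥), returns those J items in descending-w order; (iv) if J > m, returns the length-m subsequence of the top-J items (by descending w) maximizing f via the subset-selection dynamic programming — returns a list S_best with f(S_best, u, w) = max over all valid actions A of f(A, u, w), where a valid action is any ordered list of between 1 and m distinct regular items followed by a_⊥. -/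
/-- A valid action: an ordered list of between `1` and `m` distinct regular items
from the ground set, followed by the virtual item `a_⊥`. -/
def IsAction {α : Type*} (ground : Finset α) (bot : α) (m : ℕ) (A : List α) : Prop :=
  ∃ L : List α, A = L ++ [bot] ∧ L.Nodup ∧ 1 ≤ L.length ∧ L.length ≤ m ∧
    ∀ a ∈ L, a ∈ ground

open List

theorem List.Sublist.exists_sublist_length_eq {α : Type*} {l₁ l₂ : List α} (h : l₁ <+ l₂)
    {n : ℕ} (h₁ : l₁.length ≤ n) (h₂ : n ≤ l₂.length) :
    ∃ l, l₁ <+ l ∧ l <+ l₂ ∧ l.length = n := by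
  induction h generalizing n with
  | slnil => exact ⟨[], .slnil, .slnil, (Nat.le_zero.1 h₂).symm⟩
  | @cons l₁ l₂ a s ih =>
    rcases (Nat.le_succ_iff.1 h₂) with h₂ | rfl
    · obtain ⟨l, hl₁, hl₂, hn⟩ := ih h₁ h₂
      exact ⟨l, hl₁, hl₂.cons a, hn⟩
    · exact ⟨a :: l₂, s.cons a, .refl _, rfl⟩
  | cons_cons a s ih =>
    cases n with
    | zero => simp at h₁
    | succ n =>
      obtain ⟨l, hl₁, hl₂, hn⟩ := ih (Nat.le_of_succ_le_succ h₁) (Nat.le_of_succ_le_succ h₂)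
      exact ⟨a :: l, hl₁.cons_cons a, hl₂.cons_cons a, by simp [hn]⟩

section ActionValue

variable {α : Type*}

noncomputable def actionValue (u w : α → ℝ) (bot : α) (L : List α) : ℝ :=
  cascadeF u w (L ++ [bot])

variable {u w : α → ℝ} {bot : α}

theorem actionValue_nil (hbot : u bot = 1) : actionValue u w bot [] = w bot := by
  simp [actionValue, cascadeF, hbot]

theorem actionValue_cons (a : α) (L : List α) :
    actionValue u w bot (a :: L) = u a * w a + (1 - u a) * actionValue u w bot L :=
  rfl

variable (hu : ∀ a, 0 ≤ u a ∧ u a ≤ 1)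
include hu

theorem actionValue_cons_le_cons (a : α) {L L' : List α}
    (h : actionValue u w bot L ≤ actionValue u w bot L') :
    actionValue u w bot (a :: L) ≤ actionValue u w bot (a :: L') := by
  rw [actionValue_cons, actionValue_cons]
  nlinarith [(hu a).2]

theorem actionValue_swap_le {a b : α} (hab : w a ≤ w b) (L : List α) :
    actionValue u w bot (a :: b :: L) ≤ actionValue u w bot (b :: a :: L) := by
  simp only [actionValue_cons]
  nlinarith [mul_nonneg (mul_nonneg (hu a).1 (hu b).1) (sub_nonneg.2 hab)]

theorem actionValue_le {c : ℝ} (hbot : u bot = 1) (hc : w bot ≤ c) {L : List α}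
    (h : ∀ a ∈ L, w a ≤ c) : actionValue u w bot L ≤ c := by
  induction L with
  | nil => rwa [actionValue_nil hbot]
  | cons a L ih =>
    rw [forall_mem_cons] at h
    rw [actionValue_cons]
    nlinarith [ih h.2, (hu a).1, (hu a).2]

theorem le_actionValue {c : ℝ} (hbot : u bot = 1) (hc : c ≤ w bot) {L : List α}
    (h : ∀ a ∈ L, c ≤ w a) : c ≤ actionValue u w bot L := by
  induction L with
  | nil => rwa [actionValue_nil hbot]
  | cons a L ih =>
    rw [forall_mem_cons] at h
    rw [actionValue_cons]
    nlinarith [ih h.2, (hu a).1, (hu a).2]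

theorem actionValue_le_cons (hbot : u bot = 1) {a : α} {L : List α} (ha : w bot ≤ w a)
    (h : ∀ x ∈ L, w x ≤ w a) : actionValue u w bot L ≤ actionValue u w bot (a :: L) := by
  rw [actionValue_cons]
  nlinarith [actionValue_le hu hbot ha h, (hu a).1]

theorem actionValue_le_cons_erase [DecidableEq α] {b : α} {L : List α} (hb : b ∈ L)
    (h : ∀ a ∈ L, w a ≤ w b) : actionValue u w bot L ≤ actionValue u w bot (b :: L.erase b) := by
  induction L with
  | nil => simp at hb
  | cons a L ih =>
    rw [forall_mem_cons] at h
    by_cases hab : a = b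
    · subst hab
      rw [erase_cons_head]
    · rw [erase_cons_tail (by simpa using hab)]
      have hbL : b ∈ L := (mem_cons.1 hb).resolve_left (Ne.symm hab)
      exact (actionValue_cons_le_cons hu a (ih hbL h.2)).trans (actionValue_swap_le hu h.1 _)

theorem List.Perm.actionValue_le {M D : List α} (h : M ~ D)
    (hD : D.Pairwise (fun a b => w b ≤ w a)) :
    actionValue u w bot M ≤ actionValue u w bot D := by
  classical
  induction D generalizing M with
  | nil => rw [h.eq_nil]
  | cons b D ih =>
    rw [pairwise_cons] at hD
    have hmax : ∀ a ∈ M, w a ≤ w b := fun a ha => by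
      rcases mem_cons.1 (h.subset ha) with rfl | ha
      exacts [le_rfl, hD.1 a ha]
    have hrest : M.erase b ~ D := by simpa using h.erase b
    exact (actionValue_le_cons_erase hu (h.mem_iff.2 mem_cons_self) hmax).trans
      (actionValue_cons_le_cons hu b (ih hrest hD.2))

theorem actionValue_le_filter (hbot : u bot = 1) (L : List α) :
    actionValue u w bot L ≤ actionValue u w bot (L.filter (fun a => w bot < w a)) := by
  induction L with
  | nil => rfl
  | cons a L ih =>
    by_cases ha : w bot < w a
    · rw [filter_cons_of_pos (by simpa using ha)]
      exact actionValue_cons_le_cons hu a ih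
    · rw [filter_cons_of_neg (by simpa using ha)]
      have hlow : w a ≤ actionValue u w bot (L.filter (fun a => w bot < w a)) :=
        le_actionValue hu hbot (not_lt.1 ha) fun x hx =>
          (not_lt.1 ha).trans (by simpa using (mem_filter.1 hx).2 : w bot < w x).le
      rw [actionValue_cons]
      nlinarith [(hu a).1, (hu a).2]

theorem List.Sublist.actionValue_le (hbot : u bot = 1) {L D : List α} (h : L <+ D)
    (hD : D.Pairwise (fun a b => w b ≤ w a)) (hgood : ∀ a ∈ D, w bot ≤ w a) :
    actionValue u w bot L ≤ actionValue u w bot D := by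
  induction h with
  | slnil => rfl
  | @cons L D a _ ih =>
    rw [pairwise_cons] at hD
    rw [forall_mem_cons] at hgood
    exact (ih hD.2 hgood.2).trans (actionValue_le_cons hu hbot hgood.1 hD.1)
  | cons_cons a _ ih =>
    rw [pairwise_cons] at hD
    exact actionValue_cons_le_cons hu a (ih hD.2 (fun x hx => hgood x (mem_cons_of_mem a hx)))

theorem List.Sublist.exists_length_eq_actionValue_le (hbot : u bot = 1) {L D : List α}
    (h : L <+ D) (hD : D.Pairwise (fun a b => w b ≤ w a)) (hgood : ∀ a ∈ D, w bot ≤ w a)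
    {n : ℕ} (h₁ : L.length ≤ n) (h₂ : n ≤ D.length) :
    ∃ L', L' <+ D ∧ L'.length = n ∧ actionValue u w bot L ≤ actionValue u w bot L' := by
  obtain ⟨L', hLL', hL'D, hL'⟩ := h.exists_sublist_length_eq h₁ h₂
  exact ⟨L', hL'D, hL', hLL'.actionValue_le hu hbot (hD.sublist hL'D)
    fun a ha => hgood a (hL'D.subset ha)⟩

end ActionValue

namespace IsAction

variable {α : Type*} {ground : Finset α} {bot : α} {m : ℕ} {u w : α → ℝ} {A : List α}

theorem exists_cascadeF_le_pair (hA : IsAction ground bot m A)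
    (hu : ∀ a, 0 ≤ u a ∧ u a ≤ 1) (hbot : u bot = 1) (hbad : ∀ a ∈ ground, w a ≤ w bot) :
    ∃ a ∈ ground, cascadeF u w A ≤ cascadeF u w [a, bot] := by
  obtain ⟨_ | ⟨a, L⟩, rfl, -, hlen, -, hground⟩ := hA
  · simp at hlen
  refine ⟨a, hground a mem_cons_self, ?_⟩
  have hL : actionValue u w bot L ≤ actionValue u w bot [] := by
    rw [actionValue_nil hbot]
    exact actionValue_le hu hbot le_rfl fun x hx => hbad x (hground x (mem_cons_of_mem a hx))
  exact actionValue_cons_le_cons hu a hL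

theorem exists_sublist_cascadeF_le (hA : IsAction ground bot m A)
    (hu : ∀ a, 0 ≤ u a ∧ u a ≤ 1) (hbot : u bot = 1) {D : List α}
    (hD : D.Pairwise (fun a b => w b ≤ w a)) (hgood : ∀ a ∈ ground, w bot < w a → a ∈ D) :
    ∃ L, L <+ D ∧ L.length ≤ m ∧ cascadeF u w A ≤ actionValue u w bot L := by
  obtain ⟨M, rfl, hM, -, hlen, hground⟩ := hA
  set M' := M.filter (fun a => w bot < w a)
  have hM'D : M' ⊆ D := fun a ha => by
    obtain ⟨haM, ha⟩ := mem_filter.1 ha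
    exact hgood a (hground a haM) (by simpa using ha)
  obtain ⟨L, hperm, hLD⟩ := subperm_of_subset (hM.filter _) hM'D
  refine ⟨L, hLD, hperm.length_eq ▸ (length_filter_le _ _).trans hlen, ?_⟩
  exact (actionValue_le_filter hu hbot M).trans (hperm.symm.actionValue_le hu (hD.sublist hLD))

end IsAction

theorem bestPerm_correct_general {α : Type*}
    (ground : Finset α) (bot : α) (m : ℕ) (u w : α → ℝ)
    (hm1 : 1 ≤ m)
    (hu : ∀ a, 0 ≤ u a ∧ u a ≤ 1) (hbot : u bot = 1)
    (T : Finset α) (hT : ∀ a, a ∈ T ↔ a ∈ ground ∧ w bot < w a)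
    (Sbest : List α)
    (hcase0 : T = ∅ →
      ∃ astar ∈ ground,
        (∀ a ∈ ground, u a * w a + (1 - u a) * w bot
            ≤ u astar * w astar + (1 - u astar) * w bot) ∧
        Sbest = [astar, bot])
    (hcase1 : T.Nonempty → T.card ≤ m →
      ∃ L : List α, L.Perm T.toList ∧ L.Pairwise (fun a b => w b ≤ w a) ∧
        Sbest = L ++ [bot])
    (hcase2 : m < T.card →
      ∃ D L : List α, D.Perm T.toList ∧ D.Pairwise (fun a b => w b ≤ w a) ∧
        L.Sublist D ∧ L.length = m ∧
        (∀ L' : List α, L'.Sublist D → L'.length = m →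
          cascadeF u w (L' ++ [bot]) ≤ cascadeF u w (L ++ [bot])) ∧
        Sbest = L ++ [bot]) :
    IsAction ground bot m Sbest ∧
      ∀ A : List α, IsAction ground bot m A →
        cascadeF u w A ≤ cascadeF u w Sbest := by
  rcases T.eq_empty_or_nonempty with hTe | hTne
  · obtain ⟨astar, hastar, hmax, rfl⟩ := hcase0 hTe
    have hbad : ∀ a ∈ ground, w a ≤ w bot := fun a ha =>
      not_lt.1 fun h => by simpa [hTe] using (hT a).2 ⟨ha, h⟩
    refine ⟨⟨[astar], rfl, nodup_singleton _, le_rfl, hm1, by simpa⟩, fun A hA => ?_⟩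
    obtain ⟨a, ha, hAa⟩ := hA.exists_cascadeF_le_pair hu hbot hbad
    exact hAa.trans (by simpa [cascadeF, hbot] using hmax a ha)
  have hmem : ∀ {D : List α}, D.Perm T.toList → ∀ a, a ∈ D ↔ a ∈ ground ∧ w bot < w a :=
    fun hD a => hD.mem_iff.trans (Finset.mem_toList.trans (hT a))
  have hlen : ∀ {D : List α}, D.Perm T.toList → D.length = T.card :=
    fun hD => hD.length_eq.trans T.length_toList
  rcases le_or_gt T.card m with hcard | hcard
  · obtain ⟨D, hD, hDsort, rfl⟩ := hcase1 hTne hcard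
    refine ⟨⟨D, rfl, hD.nodup_iff.2 T.nodup_toList, hlen hD ▸ hTne.card_pos, hlen hD ▸ hcard,
      fun a ha => ((hmem hD a).1 ha).1⟩, fun A hA => ?_⟩
    obtain ⟨L, hLD, -, hAL⟩ := hA.exists_sublist_cascadeF_le hu hbot hDsort
      fun a ha hwa => (hmem hD a).2 ⟨ha, hwa⟩
    exact hAL.trans (hLD.actionValue_le hu hbot hDsort fun a ha => ((hmem hD a).1 ha).2.le)
  · obtain ⟨D, L, hD, hDsort, hLD, hLlen, hLmax, rfl⟩ := hcase2 hcard
    refine ⟨⟨L, rfl, hLD.nodup (hD.nodup_iff.2 T.nodup_toList), hLlen ▸ hm1, hLlen.le,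
      fun a ha => ((hmem hD a).1 (hLD.subset ha)).1⟩, fun A hA => ?_⟩
    obtain ⟨L', hL'D, hL'len, hAL'⟩ := hA.exists_sublist_cascadeF_le hu hbot hDsort
      fun a ha hwa => (hmem hD a).2 ⟨ha, hwa⟩
    obtain ⟨L'', hL''D, hL''len, hL'L''⟩ := hL'D.exists_length_eq_actionValue_le hu hbot hDsort
      (fun a ha => ((hmem hD a).1 ha).2.le) hL'len (hlen hD ▸ hcard.le)
    exact hAL'.trans (hL'L''.trans (hLmax L'' hL''D hL''len))

/-- Correctness of the `BestPerm` oracle. Let `T` be the set of regular items with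
weight above `w(a_⊥)`.  Suppose `Sbest` is the output of the algorithm:
(i) if `T = ∅`, `Sbest = (a*, a_⊥)` for a regular item `a*` maximizing
`u(a)w(a) + (1−u(a))w(a_⊥)`; (ii) if `1 ≤ |T| ≤ m`, `Sbest` lists `T` in descending
order of `w` followed by `a_⊥`; (iii) if `|T| > m`, `Sbest` is a length-`m`
subsequence of the descending-`w` ordering of `T` maximizing the cascading reward,
followed by `a_⊥`.  Then `Sbest` is a valid action and
`f(Sbest,u,w) = max_{A ∈ 𝒜} f(A,u,w)`. -/
theorem bestPerm_correct {α : Type*} [DecidableEq α]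
    (ground : Finset α) (bot : α) (m : ℕ) (u w : α → ℝ)
    (hbg : bot ∉ ground) (hg : ground.Nonempty) (hm1 : 1 ≤ m) (hm2 : m ≤ ground.card)
    (hu : ∀ a, 0 ≤ u a ∧ u a ≤ 1) (hbot : u bot = 1)
    (T : Finset α) (hT : ∀ a, a ∈ T ↔ a ∈ ground ∧ w bot < w a)
    (Sbest : List α)
    (hcase0 : T = ∅ →
      ∃ astar ∈ ground,
        (∀ a ∈ ground, u a * w a + (1 - u a) * w bot
            ≤ u astar * w astar + (1 - u astar) * w bot) ∧
        Sbest = [astar, bot])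
    (hcase1 : T.Nonempty → T.card ≤ m →
      ∃ L : List α, L.Perm T.toList ∧ L.Pairwise (fun a b => w b ≤ w a) ∧
        Sbest = L ++ [bot])
    (hcase2 : m < T.card →
      ∃ D L : List α, D.Perm T.toList ∧ D.Pairwise (fun a b => w b ≤ w a) ∧
        L.Sublist D ∧ L.length = m ∧
        (∀ L' : List α, L'.Sublist D → L'.length = m →
          cascadeF u w (L' ++ [bot]) ≤ cascadeF u w (L ++ [bot])) ∧
        Sbest = L ++ [bot]) :
    IsAction ground bot m Sbest ∧
      ∀ A : List α, IsAction ground bot m A →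
        cascadeF u w A ≤ cascadeF u w Sbest :=
  bestPerm_correct_general ground bot m u w hm1 hu hbot T hT Sbest hcase0 hcase1 hcase2
end

section
/- Cascading Bellman value difference: For two cascading MDPs M' and M'' on the same state space, item set, and horizon H, differing in attraction probabilities (q' vs q''), transitions (p' vs p''), and rewards (r' vs r''), and for any deterministic policy π, step h, and state s, the difference of value functions satisfies V'^π_h(s) − V''^π_h(s) = Σ_{t=h}^{H} E_{q'',p'',π}[ g'(s_t, A_t) − g''(s_t, A_t) + (P'(s_t,A_t) − P''(s_t,A_t))^T V'^π_{t+1} | s_h = s ], where for an MDP with parameters (q,p,r): g(s,A) = Σ_i ∏_{j<i}(1−q(s,A(j)))·q(s,A(i))·r(s,A(i)) and P(s,A)(·) = Σ_i ∏_{j<i}(1−q(s,A(j)))·q(s,A(i))·p(·|s,A(i)), and the expectation is over trajectories generated by M'' under π. -/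
/-- Value function of a cascading MDP under policy `π`, indexed by the number `n`
of remaining steps: `Vaux q p r π H n s = V^π_{H+1-n}(s)`, defined by the cascading
Bellman equation
`V^π_h(s) = Σ_i ∏_{j<i}(1−q(s,A(j)))·q(s,A(i))·(r(s,A(i)) + p(·|s,A(i))^T V^π_{h+1})`
with `A = π_h(s)` and `V^π_{H+1} = 0`. -/
noncomputable def Vaux {S α : Type*} [Fintype S]
    (q : S → α → ℝ) (p : S → α → S → ℝ) (r : S → α → ℝ)
    (π : ℕ → S → List α) (H : ℕ) : ℕ → S → ℝ
  | 0, _ => 0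
  | n + 1, s =>
      cascadeF (q s) (fun a => r s a + ∑ s', p s a s' * Vaux q p r π H n s')
        (π (H - n) s)

/-- State-occupancy measure of a cascading MDP under policy `π`, started at state
`s0` at step `h`: `occ q p π h s0 n s` is the probability of being in state `s` at
step `h + n`, using the cascading transition
`P(s₁,A)(s) = Σ_i ∏_{j<i}(1−q(s₁,A(j)))·q(s₁,A(i))·p(s|s₁,A(i))`. -/
noncomputable def occ {S α : Type*} [Fintype S] [DecidableEq S]
    (q : S → α → ℝ) (p : S → α → S → ℝ) (π : ℕ → S → List α)
    (h : ℕ) (s0 : S) : ℕ → S → ℝ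
  | 0, s => if s = s0 then 1 else 0
  | n + 1, s => ∑ s₁, occ q p π h s0 n s₁ *
      cascadeF (q s₁) (fun a => p s₁ a s) (π (h + n) s₁)

/-! Unfolding one step of both Bellman equations gives
`V'_t - V''_t = ρ_t + P''_t (V'_{t+1} - V''_{t+1})`, where
`ρ_t = (g'_t - g''_t) + (P'_t - P''_t) V'_{t+1}` is the Bellman residual of `V'` in `M''`.
Unrolling this recursion from step `h` to `H`, the products of the kernels `P''` become the
occupancy measure of `M''`. -/

open Finset

section Cascade

variable {α : Type*}

lemma cascadeF_add (u w₁ w₂ : α → ℝ) (L : List α) :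
    cascadeF u (fun a => w₁ a + w₂ a) L = cascadeF u w₁ L + cascadeF u w₂ L := by
  induction L with
  | nil => simp [cascadeF]
  | cons a t ih => simp only [cascadeF, ih]; ring

lemma cascadeF_mul_const (u w : α → ℝ) (c : ℝ) (L : List α) :
    cascadeF u (fun a => w a * c) L = cascadeF u w L * c := by
  induction L with
  | nil => simp [cascadeF]
  | cons a t ih => simp only [cascadeF, ih]; ring

lemma cascadeF_sum {ι : Type*} (u : α → ℝ) (s : Finset ι) (f : ι → α → ℝ) (L : List α) :
    cascadeF u (fun a => ∑ i ∈ s, f i a) L = ∑ i ∈ s, cascadeF u (f i) L := by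
  induction L with
  | nil => simp [cascadeF]
  | cons a t ih => simp only [cascadeF, ih, mul_sum, ← sum_add_distrib]

end Cascade

section CascadingMDP

variable {S α : Type*} [Fintype S]

/-- `g(s, A)` in the paper's notation. -/
noncomputable def cascadeReward (q r : S → α → ℝ) (s : S) (A : List α) : ℝ :=
  cascadeF (q s) (r s) A

/-- `P(s, A)(s')` in the paper's notation. -/
noncomputable def cascadeKernel (q : S → α → ℝ) (p : S → α → S → ℝ) (s : S) (A : List α)
    (s' : S) : ℝ :=
  cascadeF (q s) (fun a => p s a s') A

lemma Vaux_succ (q : S → α → ℝ) (p : S → α → S → ℝ) (r : S → α → ℝ)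
    (π : ℕ → S → List α) (H n : ℕ) (s : S) :
    Vaux q p r π H (n + 1) s = cascadeReward q r s (π (H - n) s) +
      ∑ s', cascadeKernel q p s (π (H - n) s) s' * Vaux q p r π H n s' := by
  rw [Vaux, cascadeF_add, cascadeF_sum]
  congr 1
  exact sum_congr rfl fun s' _ => cascadeF_mul_const _ (fun a => p s a s') _ _

lemma occ_succ' [DecidableEq S] (q : S → α → ℝ) (p : S → α → S → ℝ) (π : ℕ → S → List α)
    (m h : ℕ) (s₀ s : S) :
    occ q p π h s₀ (m + 1) s =
      ∑ s₁, cascadeKernel q p s₀ (π h s₀) s₁ * occ q p π (h + 1) s₁ m s := by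
  induction m generalizing s with
  | zero => simp [occ, cascadeKernel]
  | succ m ih =>
    rw [occ]
    simp only [ih, sum_mul, mul_assoc]
    rw [sum_comm]
    refine sum_congr rfl fun s₁ _ => ?_
    rw [← mul_sum, occ, add_right_comm h 1 m, add_assoc]

/-- `ρ_t(s) = (g' - g'')(s, A) + (P' - P'')(s, A)ᵀ V'_{t+1}` with `A = π_t(s)`; it equals
`V'_t(s) - (g''(s, A) + P''(s, A)ᵀ V'_{t+1})`. -/
noncomputable def bellmanResidual (q' q'' : S → α → ℝ) (p' p'' : S → α → S → ℝ)
    (r' r'' : S → α → ℝ) (π : ℕ → S → List α) (H t : ℕ) (s : S) : ℝ :=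
  (cascadeReward q' r' s (π t s) - cascadeReward q'' r'' s (π t s)) +
    ∑ s', (cascadeKernel q' p' s (π t s) s' - cascadeKernel q'' p'' s (π t s) s') *
      Vaux q' p' r' π H (H - t) s'

lemma sum_occ_succ_mul [DecidableEq S] (q : S → α → ℝ) (p : S → α → S → ℝ)
    (π : ℕ → S → List α) (m h : ℕ) (s₀ : S) (f : S → ℝ) :
    ∑ s, occ q p π h s₀ (m + 1) s * f s =
      ∑ s₁, cascadeKernel q p s₀ (π h s₀) s₁ * ∑ s, occ q p π (h + 1) s₁ m s * f s := by
  simp only [occ_succ', sum_mul, mul_sum, mul_assoc]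
  exact sum_comm

variable (q' q'' : S → α → ℝ) (p' p'' : S → α → S → ℝ) (r' r'' : S → α → ℝ)
  (π : ℕ → S → List α) (H : ℕ)

lemma Vaux_succ_sub_Vaux_succ {n : ℕ} (hn : n ≤ H) (s : S) :
    Vaux q' p' r' π H (n + 1) s - Vaux q'' p'' r'' π H (n + 1) s =
      bellmanResidual q' q'' p' p'' r' r'' π H (H - n) s +
        ∑ s₁, cascadeKernel q'' p'' s (π (H - n) s) s₁ *
          (Vaux q' p' r' π H n s₁ - Vaux q'' p'' r'' π H n s₁) := by
  rw [Vaux_succ, Vaux_succ, bellmanResidual, Nat.sub_sub_self hn]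
  simp only [sub_mul, mul_sub, sum_sub_distrib]
  ring

theorem Vaux_sub_Vaux_eq_sum_occ_mul_bellmanResidual [DecidableEq S] {n h : ℕ} (s : S)
    (hn : h + n = H + 1) :
    Vaux q' p' r' π H n s - Vaux q'' p'' r'' π H n s =
        ∑ t ∈ Icc h H, ∑ st, occ q'' p'' π h s (t - h) st *
          bellmanResidual q' q'' p' p'' r' r'' π H t st := by
  induction n generalizing h s with
  | zero => simp [Vaux, Icc_eq_empty_of_lt (show H < h by omega)]
  | succ n ih =>
    have hH : H - n = h := by omega
    have hrest : ∀ t ∈ Icc (h + 1) H,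
        ∑ st, occ q'' p'' π h s (t - h) st * bellmanResidual q' q'' p' p'' r' r'' π H t st =
          ∑ s₁, cascadeKernel q'' p'' s (π h s) s₁ *
            ∑ st, occ q'' p'' π (h + 1) s₁ (t - (h + 1)) st *
              bellmanResidual q' q'' p' p'' r' r'' π H t st := by
      intro t ht
      rw [show t - h = t - (h + 1) + 1 by grind, sum_occ_succ_mul]
    rw [Vaux_succ_sub_Vaux_succ (hn := by omega), hH,
      ← insert_Icc_add_one_left_eq_Icc (show h ≤ H by omega), sum_insert (by simp),
      sum_congr rfl hrest, sum_comm]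
    simp only [ih _ (show h + 1 + n = H + 1 by omega), mul_sum]
    simp [occ]

end CascadingMDP

theorem cascading_value_difference_general {S α : Type*} [Fintype S] [DecidableEq S]
    (q' q'' : S → α → ℝ) (p' p'' : S → α → S → ℝ) (r' r'' : S → α → ℝ)
    (π : ℕ → S → List α) (H : ℕ) (h : ℕ) (s : S)
    (hh : h ≤ H + 1) :
    Vaux q' p' r' π H (H + 1 - h) s - Vaux q'' p'' r'' π H (H + 1 - h) s =
      ∑ t ∈ Finset.Icc h H, ∑ st : S,
        occ q'' p'' π h s (t - h) st *
          ((cascadeF (q' st) (r' st) (π t st)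
              - cascadeF (q'' st) (r'' st) (π t st))
            + ∑ s' : S,
                (cascadeF (q' st) (fun a => p' st a s') (π t st)
                  - cascadeF (q'' st) (fun a => p'' st a s') (π t st))
                  * Vaux q' p' r' π H (H - t) s') := by
  exact Vaux_sub_Vaux_eq_sum_occ_mul_bellmanResidual q' q'' p' p'' r' r'' π H s (by omega)

/-- Cascading value difference lemma: for two cascading MDPs `M'` and `M''` sharing
states, items and horizon, and any policy `π`, step `h ≤ H + 1` and state `s`,
`V'^π_h(s) − V''^π_h(s) = Σ_{t=h}^{H} E_{q'',p'',π}[ g'(s_t,A_t) − g''(s_t,A_t)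
  + (P'(s_t,A_t) − P''(s_t,A_t))^T V'^π_{t+1} | s_h = s ]`,
where `g(s,A) = Σ_i ∏_{j<i}(1−q)·q·r` and `P(s,A)(·) = Σ_i ∏_{j<i}(1−q)·q·p(·|s,A(i))`,
and the expectation over trajectories of `M''` is expressed via the occupancy
measure `occ`. -/
theorem cascading_value_difference {S α : Type*} [Fintype S] [DecidableEq S]
    (q' q'' : S → α → ℝ) (p' p'' : S → α → S → ℝ) (r' r'' : S → α → ℝ)
    (π : ℕ → S → List α) (H : ℕ) (h : ℕ) (s : S)
    (hh : h ≤ H + 1)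
    (hq' : ∀ s a, 0 ≤ q' s a ∧ q' s a ≤ 1) (hq'' : ∀ s a, 0 ≤ q'' s a ∧ q'' s a ≤ 1)
    (hp' : ∀ s a, (∀ s', 0 ≤ p' s a s') ∧ ∑ s', p' s a s' = 1)
    (hp'' : ∀ s a, (∀ s', 0 ≤ p'' s a s') ∧ ∑ s', p'' s a s' = 1) :
    Vaux q' p' r' π H (H + 1 - h) s - Vaux q'' p'' r'' π H (H + 1 - h) s =
      ∑ t ∈ Finset.Icc h H, ∑ st : S,
        occ q'' p'' π h s (t - h) st *
          ((cascadeF (q' st) (r' st) (π t st)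
              - cascadeF (q'' st) (r'' st) (π t st))
            + ∑ s' : S,
                (cascadeF (q' st) (fun a => p' st a s') (π t st)
                  - cascadeF (q'' st) (fun a => p'' st a s') (π t st))
                  * Vaux q' p' r' π H (H - t) s') :=
  cascading_value_difference_general q' q'' p' p'' r' r'' π H h s hh
end

section
/- Variance comparison under distribution shift (Lemma 10–12 style): Let p_1 and p_2 be probability distributions on a finite set S with KL(p_1 ‖ p_2) ≤ α, and let f, g: S → [0, b]. Then (a) |p_1^T f − p_2^T f| ≤ √(2·Var_{p_2}(f)·α) + (2/3)·b·α; (b) Var_{p_2}(f) ≤ 2·Var_{p_1}(f) + 4b²α and Var_{p_1}(f) ≤ 2·Var_{p_2}(f) + 4b²α; (c) Var_{p_1}(f) ≤ 2·Var_{p_1}(g) + 2b·p_1^T|f − g|. -/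
/-!
Part (a) is Bernstein's inequality transported from `p₂` to `p₁` by the Donsker–Varadhan
formula: for `η > 0`, `η (p₁ᵀf - p₂ᵀf) ≤ log p₂ᵀ exp (η (f - p₂ᵀf)) + KL(p₁‖p₂)`, and the bound
`eᵘ - u - 1 ≤ u² / (2 (1 - u / 3))` for `u ≤ η b` controls the log-moment generating function by
`η² Var_{p₂}(f) / (2 (1 - η b / 3))`; optimising over `η` gives the square root term.

Part (b) applies (a) to `h = (f - c)² ∈ [0, b²]`, with `c` the mean of `f` under one of the two
distributions: since `Var(h) ≤ b² · p₂ᵀh`, AM-GM absorbs the square root into `p₂ᵀh / 2`, and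
`pᵀ(f - c)²` is the variance under `p` plus the squared distance of `c` to the mean.

Part (c) is the pointwise bound `(f - c)² ≤ 2 (g - c)² + 2 b |f - g|` at `c = p₁ᵀg`.
-/

open Real Set

theorem two_mul_one_sub_div_three_mul_exp_sub_sub_one_le (u : ℝ) :
    2 * (1 - u / 3) * (exp u - u - 1) ≤ u ^ 2 := by
  -- Multiplied out, the claim is `0 ≤ K u`; and `K` is convex with `K 0 = K' 0 = 0`.
  let K : ℝ → ℝ := fun x ↦ x ^ 2 + 4 * x + 6 - (6 - 2 * x) * exp x
  let K' : ℝ → ℝ := fun x ↦ 2 * x + 4 - (4 - 2 * x) * exp x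
  have hK : ∀ x, HasDerivAt K (K' x) x := fun x ↦
    ((((hasDerivAt_pow 2 x).add ((hasDerivAt_id x).const_mul 4)).add_const 6).sub
      (((hasDerivAt_id x).const_mul 2).const_sub 6 |>.mul (hasDerivAt_exp x))).congr_deriv
      (by simp only [K', id]; ring)
  have hK' : ∀ x, HasDerivAt K' (2 * (1 - (1 - x) * exp x)) x := fun x ↦
    ((((hasDerivAt_id x).const_mul 2).add_const 4).sub
      (((hasDerivAt_id x).const_mul 2).const_sub 4 |>.mul (hasDerivAt_exp x))).congr_deriv
      (by simp only [id]; ring)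
  have hK'_mono : Monotone K' := by
    refine monotone_of_deriv_nonneg (fun x ↦ (hK' x).differentiableAt) fun x ↦ ?_
    have h := mul_le_mul_of_nonneg_right (one_sub_le_exp_neg x) (exp_pos x).le
    rw [← exp_add, neg_add_cancel, exp_zero] at h
    rw [(hK' x).deriv]
    linarith
  have hconv : ConvexOn ℝ univ K := by
    refine Monotone.convexOn_univ_of_deriv (fun x ↦ (hK x).differentiableAt) ?_
    rwa [show deriv K = K' from funext fun x ↦ (hK x).deriv]
  have hmin : IsMinOn K univ 0 := by
    refine hconv.isMinOn_of_rightDeriv_eq_zero (by simp) ?_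
    rw [(hK 0).hasDerivWithinAt.derivWithin (uniqueDiffWithinAt_Ioi 0)]
    simp [K']
  have := hmin (mem_univ u)
  simp only [K, mem_ofPred_eq] at this
  norm_num at this
  linarith

theorem two_mul_one_sub_div_three_mul_exp_sub_sub_one_le_of_le {u c : ℝ} (h : u ≤ c) :
    2 * (1 - c / 3) * (exp u - u - 1) ≤ u ^ 2 := by
  have : 0 ≤ exp u - u - 1 := by linarith [add_one_le_exp u]
  nlinarith [two_mul_one_sub_div_three_mul_exp_sub_sub_one_le u]

theorem le_sqrt_add_of_sq_le_add_mul {t c d : ℝ} (hc : 0 ≤ c) (h : t ^ 2 ≤ d + c * t) :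
    t ≤ √d + c := by
  by_contra! ht
  have hd : d < (t - c) ^ 2 := lt_sq_of_sqrt_lt (by linarith)
  nlinarith [sqrt_nonneg d]

/-- Optimising a Chernoff bound over `η`; Bernstein's choice is `η = t / (V + b t / 3)`. -/
theorem le_sqrt_add_of_forall_bernstein {t V b α : ℝ} (hV : 0 ≤ V) (hb : 0 ≤ b) (hα : 0 < α)
    (h : ∀ η, 0 < η → η * b < 3 → 2 * (1 - η * b / 3) * (η * t - α) ≤ η ^ 2 * V) :
    t ≤ √(2 * V * α) + 2 / 3 * b * α := by
  rcases le_or_gt t 0 with ht | ht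
  · linarith [sqrt_nonneg (2 * V * α), mul_nonneg hb hα.le]
  rcases hV.eq_or_lt with rfl | hV
  · by_contra! hlt
    rw [mul_zero, zero_mul, sqrt_zero, zero_add] at hlt
    have hη : 2 * α / t * b < 3 := by
      rw [div_mul_eq_mul_div, div_lt_iff₀ ht]; linarith
    have := h (2 * α / t) (by positivity) hη
    rw [div_mul_cancel₀ _ ht.ne'] at this
    nlinarith
  · set D := V + b * t / 3 with hD_def
    have hD : 0 < D := by positivity
    have := h (t / D) (by positivity) (by rw [div_mul_eq_mul_div, div_lt_iff₀ hD, hD_def]; linarith)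
    have hsq : t ^ 2 ≤ 2 * V * α + 2 / 3 * b * α * t := by
      have e : 1 - t / D * b / 3 = V / D := by field_simp; ring
      rw [e] at this
      have key : V / D ^ 2 * (2 * (t ^ 2 - α * D)) ≤ V / D ^ 2 * t ^ 2 := by
        convert this using 1 <;> field_simp
      have := le_of_mul_le_mul_left key (by positivity)
      rw [hD_def] at this
      linarith
    exact le_sqrt_add_of_sq_le_add_mul (by positivity) hsq

theorem sub_sq_le_two_mul_mul_abs_add_two_mul_sq {x y c b : ℝ} (h : |x - y| ≤ b) :
    (x - c) ^ 2 ≤ 2 * b * |x - y| + 2 * (y - c) ^ 2 := by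
  have : (x - y) ^ 2 ≤ b * |x - y| := by
    rw [← sq_abs, sq]; exact mul_le_mul_of_nonneg_right h (abs_nonneg _)
  nlinarith [sq_nonneg (x - y - (y - c))]

theorem sub_sq_mem_Icc {x y b : ℝ} (hx : x ∈ Icc 0 b) (hy : y ∈ Icc 0 b) :
    (x - y) ^ 2 ∈ Icc 0 (b ^ 2) := by
  refine ⟨sq_nonneg _, ?_⟩
  rw [← sq_abs]
  exact pow_le_pow_left₀ (abs_nonneg _) (abs_sub_le_of_nonneg_of_le hx.1 hx.2 hy.1 hy.2) 2

section FiniteDistribution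

open Finset

variable {S : Type*} [Fintype S]

def weightedVariance (p f : S → ℝ) : ℝ := ∑ s, p s * f s ^ 2 - (∑ s, p s * f s) ^ 2

theorem sum_mul_const_mul_sub {p : S → ℝ} (hp : ∑ s, p s = 1) (f : S → ℝ) (a c : ℝ) :
    ∑ s, p s * (a * (f s - c)) = a * (∑ s, p s * f s - c) := by
  simp only [mul_sub, mul_left_comm _ a, ← mul_sum, sum_sub_distrib, ← sum_mul, hp]
  ring

theorem sum_mul_sub_sq {p : S → ℝ} (hp : ∑ s, p s = 1) (f : S → ℝ) (c : ℝ) :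
    ∑ s, p s * (f s - c) ^ 2 = weightedVariance p f + (∑ s, p s * f s - c) ^ 2 := by
  have e : ∀ s, p s * (f s - c) ^ 2 = p s * f s ^ 2 - 2 * c * (p s * f s) + c ^ 2 * p s :=
    fun s ↦ by ring
  simp only [e, sum_add_distrib, sum_sub_distrib, ← mul_sum, hp, weightedVariance]
  ring

theorem weightedVariance_le_sum_mul_sub_sq {p : S → ℝ} (hp : ∑ s, p s = 1) (f : S → ℝ) (c : ℝ) :
    weightedVariance p f ≤ ∑ s, p s * (f s - c) ^ 2 := by
  rw [sum_mul_sub_sq hp]; exact le_add_of_nonneg_right (sq_nonneg _)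

theorem weightedVariance_nonneg {p : S → ℝ} (hp : p ∈ stdSimplex ℝ S) (f : S → ℝ) :
    0 ≤ weightedVariance p f := by
  have := sum_mul_sub_sq hp.2 f (∑ s, p s * f s)
  rw [sub_self, zero_pow two_ne_zero, add_zero] at this
  rw [← this]
  exact sum_nonneg fun s _ ↦ mul_nonneg (hp.1 s) (sq_nonneg _)

theorem weightedVariance_neg (p f : S → ℝ) : weightedVariance p (-f) = weightedVariance p f := by
  simp [weightedVariance]

theorem weightedVariance_le_mul_sum {p h : S → ℝ} {B : ℝ} (hp : p ∈ stdSimplex ℝ S)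
    (hh : ∀ s, h s ∈ Icc 0 B) : weightedVariance p h ≤ B * ∑ s, p s * h s := by
  rw [weightedVariance, mul_sum]
  refine (sub_le_self _ (sq_nonneg _)).trans (sum_le_sum fun s _ ↦ ?_)
  have := mul_le_mul_of_nonneg_left (hh s).2 (mul_nonneg (hp.1 s) (hh s).1)
  linarith

theorem sum_mul_mem_Icc {p f : S → ℝ} {b : ℝ} (hp : p ∈ stdSimplex ℝ S) (hf : ∀ s, f s ∈ Icc 0 b) :
    ∑ s, p s * f s ∈ Icc 0 b := by
  refine ⟨sum_nonneg fun s _ ↦ mul_nonneg (hp.1 s) (hf s).1, ?_⟩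
  calc ∑ s, p s * f s ≤ ∑ s, p s * b :=
        sum_le_sum fun s _ ↦ mul_le_mul_of_nonneg_left (hf s).2 (hp.1 s)
    _ = b := by rw [← sum_mul, hp.2, one_mul]

theorem mul_log_div_le_sub {a q : ℝ} (ha : 0 < a) (hq : 0 < q) : a * log (q / a) ≤ q - a := by
  have := mul_le_mul_of_nonneg_left (log_le_sub_one_of_pos (div_pos hq ha)) ha.le
  rwa [mul_sub, mul_div_cancel₀ _ ha.ne', mul_one] at this

theorem sum_mul_exp_pos {p : S → ℝ} (hp : p ∈ stdSimplex ℝ S) (h : S → ℝ) :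
    0 < ∑ s, p s * exp (h s) := by
  obtain ⟨s, -, hs⟩ := exists_ne_zero_of_sum_ne_zero (hp.2.trans_ne one_ne_zero)
  exact sum_pos' (fun s _ ↦ mul_nonneg (hp.1 s) (exp_pos _).le)
    ⟨s, mem_univ s, mul_pos ((hp.1 s).lt_of_ne' hs) (exp_pos _)⟩

/-- The Donsker–Varadhan inequality. -/
theorem sum_mul_le_log_sum_mul_exp_add_sum_mul_log_div {p₁ p₂ : S → ℝ}
    (hp₁ : p₁ ∈ stdSimplex ℝ S) (hp₂ : p₂ ∈ stdSimplex ℝ S) (hac : ∀ s, p₂ s = 0 → p₁ s = 0)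
    (h : S → ℝ) :
    ∑ s, p₁ s * h s ≤ log (∑ s, p₂ s * exp (h s)) + ∑ s, p₁ s * log (p₁ s / p₂ s) := by
  have hZ := sum_mul_exp_pos hp₂ h
  set Z := ∑ s, p₂ s * exp (h s)
  -- Gibbs' inequality for `p₁` against the tilted distribution `p₂ eʰ / Z`.
  have key : ∀ s, p₁ s * (h s - log (p₁ s / p₂ s) - log Z) ≤ p₂ s * exp (h s) / Z - p₁ s := by
    intro s
    rcases (hp₁.1 s).eq_or_lt with h0 | h1
    · rw [← h0, zero_mul, sub_zero]
      exact div_nonneg (mul_nonneg (hp₂.1 s) (exp_pos _).le) hZ.le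
    have h2 : 0 < p₂ s := (hp₂.1 s).lt_of_ne' fun h0 ↦ h1.ne' (hac s h0)
    have hq : 0 < p₂ s * exp (h s) := mul_pos h2 (exp_pos _)
    convert mul_log_div_le_sub h1 (div_pos hq hZ) using 2
    rw [log_div h1.ne' h2.ne', log_div (div_pos hq hZ).ne' h1.ne', log_div hq.ne' hZ.ne',
      log_mul h2.ne' (exp_pos _).ne', log_exp]
    ring
  have := sum_le_sum fun s (_ : s ∈ Finset.univ) ↦ key s
  simp only [mul_sub, sum_sub_distrib, ← sum_div, ← sum_mul, hp₁.2, one_mul] at this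
  rw [div_self hZ.ne'] at this
  linarith

theorem two_mul_one_sub_div_three_mul_sum_mul_exp_le {p h : S → ℝ} {c : ℝ}
    (hp : p ∈ stdSimplex ℝ S) (hh : ∀ s, h s ≤ c) :
    2 * (1 - c / 3) * (∑ s, p s * exp (h s) - 1 - ∑ s, p s * h s) ≤ ∑ s, p s * h s ^ 2 := by
  set k := 2 * (1 - c / 3)
  have e : ∀ s, p s * (k * (exp (h s) - h s - 1)) =
      k * (p s * exp (h s)) - k * (p s * h s) - k * p s := fun s ↦ by ring
  calc k * (∑ s, p s * exp (h s) - 1 - ∑ s, p s * h s)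
      = ∑ s, p s * (k * (exp (h s) - h s - 1)) := by
        rw [sum_congr rfl fun s _ ↦ e s, sum_sub_distrib, sum_sub_distrib, ← mul_sum, ← mul_sum,
          ← mul_sum, hp.2]
        ring
    _ ≤ ∑ s, p s * h s ^ 2 := sum_le_sum fun s _ ↦
        mul_le_mul_of_nonneg_left
          (two_mul_one_sub_div_three_mul_exp_sub_sub_one_le_of_le (hh s)) (hp.1 s)

theorem sum_mul_sub_sum_mul_le_of_kl {p₁ p₂ f : S → ℝ} {b α : ℝ}
    (hp₁ : p₁ ∈ stdSimplex ℝ S) (hp₂ : p₂ ∈ stdSimplex ℝ S) (hac : ∀ s, p₂ s = 0 → p₁ s = 0)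
    (hKL : ∑ s, p₁ s * log (p₁ s / p₂ s) ≤ α) (hα : 0 < α) (hb : 0 ≤ b)
    (hf : ∀ s, f s - ∑ s, p₂ s * f s ≤ b) :
    ∑ s, p₁ s * f s - ∑ s, p₂ s * f s ≤ √(2 * weightedVariance p₂ f * α) + 2 / 3 * b * α := by
  set m := ∑ s, p₂ s * f s
  refine le_sqrt_add_of_forall_bernstein (weightedVariance_nonneg hp₂ f) hb hα fun η hη hηb ↦ ?_
  let h s := η * (f s - m)
  have hmean₁ : ∑ s, p₁ s * h s = η * (∑ s, p₁ s * f s - m) := sum_mul_const_mul_sub hp₁.2 f η m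
  have hmean₂ : ∑ s, p₂ s * h s = 0 := by rw [sum_mul_const_mul_sub hp₂.2, sub_self, mul_zero]
  have hsq₂ : ∑ s, p₂ s * h s ^ 2 = η ^ 2 * weightedVariance p₂ f := by
    simp only [h, mul_pow, mul_left_comm _ (η ^ 2), ← mul_sum, sum_mul_sub_sq hp₂.2]
    ring
  have hdv := sum_mul_le_log_sum_mul_exp_add_sum_mul_log_div hp₁ hp₂ hac h
  have hlog := log_le_sub_one_of_pos (sum_mul_exp_pos hp₂ h)
  have hmgf := two_mul_one_sub_div_three_mul_sum_mul_exp_le hp₂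
    fun s ↦ mul_le_mul_of_nonneg_left (hf s) hη.le
  rw [hmean₂, hsq₂, sub_zero] at hmgf
  rw [hmean₁] at hdv
  have hchernoff : η * (∑ s, p₁ s * f s - m) - α ≤ ∑ s, p₂ s * exp (h s) - 1 := by linarith
  have hk : 0 ≤ 1 - η * b / 3 := by linarith
  linarith [mul_le_mul_of_nonneg_left hchernoff hk]

theorem abs_sum_mul_sub_sum_mul_le_of_kl {p₁ p₂ f : S → ℝ} {b α : ℝ}
    (hp₁ : p₁ ∈ stdSimplex ℝ S) (hp₂ : p₂ ∈ stdSimplex ℝ S) (hac : ∀ s, p₂ s = 0 → p₁ s = 0)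
    (hKL : ∑ s, p₁ s * log (p₁ s / p₂ s) ≤ α) (hα : 0 < α) (hf : ∀ s, f s ∈ Icc 0 b) :
    |∑ s, p₁ s * f s - ∑ s, p₂ s * f s| ≤ √(2 * weightedVariance p₂ f * α) + 2 / 3 * b * α := by
  have hm := sum_mul_mem_Icc hp₂ hf
  have hb : 0 ≤ b := hm.1.trans hm.2
  have hupper := sum_mul_sub_sum_mul_le_of_kl (f := f) hp₁ hp₂ hac hKL hα hb fun s ↦ by
    linarith [(hf s).2, hm.1]
  have hlower := sum_mul_sub_sum_mul_le_of_kl (f := -f) hp₁ hp₂ hac hKL hα hb fun s ↦ by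
    simp only [Pi.neg_apply, mul_neg, sum_neg_distrib]; linarith [(hf s).1, hm.2]
  simp only [Pi.neg_apply, mul_neg, sum_neg_distrib, weightedVariance_neg] at hlower
  rw [abs_sub_le_iff]
  constructor <;> linarith

theorem abs_sum_mul_sub_sum_mul_le_half_add_of_kl {p₁ p₂ h : S → ℝ} {B α : ℝ}
    (hp₁ : p₁ ∈ stdSimplex ℝ S) (hp₂ : p₂ ∈ stdSimplex ℝ S) (hac : ∀ s, p₂ s = 0 → p₁ s = 0)
    (hKL : ∑ s, p₁ s * log (p₁ s / p₂ s) ≤ α) (hα : 0 < α) (hh : ∀ s, h s ∈ Icc 0 B) :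
    |∑ s, p₁ s * h s - ∑ s, p₂ s * h s| ≤ (∑ s, p₂ s * h s) / 2 + 5 / 3 * B * α := by
  have hE := sum_mul_mem_Icc hp₂ hh
  -- `Var ≤ B · E` and AM-GM absorb the square root into the mean.
  have hsqrt : √(2 * weightedVariance p₂ h * α) ≤ (∑ s, p₂ s * h s) / 2 + B * α := by
    have hB : 0 ≤ B := hE.1.trans hE.2
    rw [sqrt_le_left (add_nonneg (by linarith [hE.1]) (mul_nonneg hB hα.le))]
    nlinarith [mul_le_mul_of_nonneg_right (weightedVariance_le_mul_sum hp₂ hh) hα.le,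
      sq_nonneg ((∑ s, p₂ s * h s) / 2 - B * α)]
  linarith [abs_sum_mul_sub_sum_mul_le_of_kl hp₁ hp₂ hac hKL hα hh]

theorem weightedVariance_snd_le_of_kl {p₁ p₂ f : S → ℝ} {b α : ℝ}
    (hp₁ : p₁ ∈ stdSimplex ℝ S) (hp₂ : p₂ ∈ stdSimplex ℝ S) (hac : ∀ s, p₂ s = 0 → p₁ s = 0)
    (hKL : ∑ s, p₁ s * log (p₁ s / p₂ s) ≤ α) (hα : 0 < α) (hf : ∀ s, f s ∈ Icc 0 b) :
    weightedVariance p₂ f ≤ 2 * weightedVariance p₁ f + 4 * b ^ 2 * α := by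
  have hc := sum_mul_mem_Icc hp₁ hf
  have key := abs_sub_le_iff.1 <| abs_sum_mul_sub_sum_mul_le_half_add_of_kl hp₁ hp₂ hac hKL hα
    fun s ↦ sub_sq_mem_Icc (hf s) hc
  rw [sum_mul_sub_sq hp₁.2, sum_mul_sub_sq hp₂.2, sub_self, zero_pow two_ne_zero, add_zero] at key
  linarith [key.2, sq_nonneg (∑ s, p₂ s * f s - ∑ s, p₁ s * f s), mul_nonneg (sq_nonneg b) hα.le]

theorem weightedVariance_fst_le_of_kl {p₁ p₂ f : S → ℝ} {b α : ℝ}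
    (hp₁ : p₁ ∈ stdSimplex ℝ S) (hp₂ : p₂ ∈ stdSimplex ℝ S) (hac : ∀ s, p₂ s = 0 → p₁ s = 0)
    (hKL : ∑ s, p₁ s * log (p₁ s / p₂ s) ≤ α) (hα : 0 < α) (hf : ∀ s, f s ∈ Icc 0 b) :
    weightedVariance p₁ f ≤ 2 * weightedVariance p₂ f + 4 * b ^ 2 * α := by
  have hc := sum_mul_mem_Icc hp₂ hf
  have key := abs_sub_le_iff.1 <| abs_sum_mul_sub_sum_mul_le_half_add_of_kl hp₁ hp₂ hac hKL hα
    fun s ↦ sub_sq_mem_Icc (hf s) hc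
  rw [sum_mul_sub_sq hp₁.2, sum_mul_sub_sq hp₂.2, sub_self, zero_pow two_ne_zero, add_zero] at key
  linarith [key.1, sq_nonneg (∑ s, p₁ s * f s - ∑ s, p₂ s * f s), mul_nonneg (sq_nonneg b) hα.le,
    weightedVariance_nonneg hp₂ f]

theorem weightedVariance_le_two_mul_add_sum_mul_abs_sub {p f g : S → ℝ} {b : ℝ}
    (hp : p ∈ stdSimplex ℝ S) (hfg : ∀ s, |f s - g s| ≤ b) :
    weightedVariance p f ≤ 2 * weightedVariance p g + 2 * b * ∑ s, p s * |f s - g s| := by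
  set c := ∑ s, p s * g s
  calc weightedVariance p f ≤ ∑ s, p s * (f s - c) ^ 2 :=
        weightedVariance_le_sum_mul_sub_sq hp.2 f c
    _ ≤ ∑ s, p s * (2 * b * |f s - g s| + 2 * (g s - c) ^ 2) := sum_le_sum fun s _ ↦
        mul_le_mul_of_nonneg_left (sub_sq_le_two_mul_mul_abs_add_two_mul_sq (hfg s)) (hp.1 s)
    _ = 2 * b * ∑ s, p s * |f s - g s| + 2 * ∑ s, p s * (g s - c) ^ 2 := by
        simp only [mul_add, sum_add_distrib, mul_sum]
        congr 1 <;> exact sum_congr rfl fun s _ ↦ by ring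
    _ = 2 * weightedVariance p g + 2 * b * ∑ s, p s * |f s - g s| := by
        rw [sum_mul_sub_sq hp.2, sub_self]; ring

end FiniteDistribution

/-- Variance comparison under distribution shift: for probability distributions
`p₁, p₂` on a finite set with `KL(p₁‖p₂) ≤ α` and functions `f, g` with values in
`[0,b]`:
(a) `|p₁^T f − p₂^T f| ≤ √(2·Var_{p₂}(f)·α) + (2/3)·b·α`;
(b) `Var_{p₂}(f) ≤ 2·Var_{p₁}(f) + 4b²α` and `Var_{p₁}(f) ≤ 2·Var_{p₂}(f) + 4b²α`;
(c) `Var_{p₁}(f) ≤ 2·Var_{p₁}(g) + 2b·p₁^T|f − g|`. -/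
theorem kl_variance_comparison {S : Type*} [Fintype S]
    (p₁ p₂ : S → ℝ) (f g : S → ℝ) (b α : ℝ)
    (hp₁ : ∀ s, 0 ≤ p₁ s) (hp₁sum : ∑ s, p₁ s = 1)
    (hp₂ : ∀ s, 0 ≤ p₂ s) (hp₂sum : ∑ s, p₂ s = 1)
    (hac : ∀ s, p₂ s = 0 → p₁ s = 0)
    (hα : 0 < α)
    (hKL : ∑ s, p₁ s * Real.log (p₁ s / p₂ s) ≤ α)
    (hf : ∀ s, 0 ≤ f s ∧ f s ≤ b) (hg : ∀ s, 0 ≤ g s ∧ g s ≤ b) :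
    (|(∑ s, p₁ s * f s) - ∑ s, p₂ s * f s| ≤
        Real.sqrt (2 * ((∑ s, p₂ s * f s ^ 2) - (∑ s, p₂ s * f s) ^ 2) * α)
          + (2/3) * b * α) ∧
    ((∑ s, p₂ s * f s ^ 2) - (∑ s, p₂ s * f s) ^ 2 ≤
        2 * ((∑ s, p₁ s * f s ^ 2) - (∑ s, p₁ s * f s) ^ 2) + 4 * b ^ 2 * α) ∧
    ((∑ s, p₁ s * f s ^ 2) - (∑ s, p₁ s * f s) ^ 2 ≤
        2 * ((∑ s, p₂ s * f s ^ 2) - (∑ s, p₂ s * f s) ^ 2) + 4 * b ^ 2 * α) ∧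
    ((∑ s, p₁ s * f s ^ 2) - (∑ s, p₁ s * f s) ^ 2 ≤
        2 * ((∑ s, p₁ s * g s ^ 2) - (∑ s, p₁ s * g s) ^ 2)
          + 2 * b * ∑ s, p₁ s * |f s - g s|) := by
  have hp₁' : p₁ ∈ stdSimplex ℝ S := ⟨hp₁, hp₁sum⟩
  have hp₂' : p₂ ∈ stdSimplex ℝ S := ⟨hp₂, hp₂sum⟩
  exact ⟨abs_sum_mul_sub_sum_mul_le_of_kl hp₁' hp₂' hac hKL hα hf,
    weightedVariance_snd_le_of_kl hp₁' hp₂' hac hKL hα hf,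
    weightedVariance_fst_le_of_kl hp₁' hp₂' hac hKL hα hf,
    weightedVariance_le_two_mul_add_sum_mul_abs_sub hp₁' fun s ↦
      abs_sub_le_of_nonneg_of_le (hf s).1 (hf s).2 (hg s).1 (hg s).2⟩
end
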